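/- arXiv:2007.07183 — 2 statements merged into one kernel-verified Lean document; each statement's English description precedes it below -/
import Mathlib

section
/- Every finite self-contained bipartite graph G = (V, F, E) admits a causal-ordering decomposition; in particular, if F is nonempty then F contains a minimal self-contained subset. -/
variable {F V : Type*} [Fintype F] [Fintype V] [DecidableEq F] [DecidableEq V]

/-- The adjacency set `N(S)` of a set `S ⊆ F`, restricted to the vertex set `V'`. -/
def subAdj (E : Finset (F × V)) (V' : Finset V) (S : Finset F) : Finset V :=
  V'.filter fun v => ∃ f ∈ S, (f, v) ∈ E

/-- `S ⊆ F` is a self-contained set (in the bipartite graph with edges `E` whose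
variable part is `V'`): `|S| = |N(S)|` and `|S'| ≤ |N(S')|` for every `S' ⊆ S`. -/
def SCSet (E : Finset (F × V)) (V' : Finset V) (S : Finset F) : Prop :=
  S.card = (subAdj E V' S).card ∧ ∀ S' ⊆ S, S'.card ≤ (subAdj E V' S').card

/-- The bipartite graph with equation part `F'`, variable part `V'` and edges `E`
is self-contained: `|F'| = |V'|` and `F'` is self-contained. -/
def SCGraph (E : Finset (F × V)) (F' : Finset F) (V' : Finset V) : Prop :=
  F'.card = V'.card ∧ SCSet E V' F'

/-- `S` is a minimal self-contained subset of `F'` (variable part `V'`). -/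
def MinSCSet (E : Finset (F × V)) (F' : Finset F) (V' : Finset V) (S : Finset F) : Prop :=
  S ⊆ F' ∧ S.Nonempty ∧ SCSet E V' S ∧ ∀ S' ⊂ S, S'.Nonempty → ¬ SCSet E V' S'

/-- `S^(1) ∪ ⋯ ∪ S^(i-1)`, the union of the sets preceding index `i`. -/
def codPrev {n : ℕ} (S : Fin n → Finset F) (i : Fin n) : Finset F :=
  (Finset.univ.filter fun j => j < i).biUnion S

-- aux lemmas
lemma mem_subAdj' {E : Finset (F × V)} {V' : Finset V} {S : Finset F} {v : V} :
    v ∈ subAdj E V' S ↔ v ∈ V' ∧ ∃ f ∈ S, (f, v) ∈ E := by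
  simp [subAdj]

lemma subAdj_subset' (E : Finset (F × V)) (V' : Finset V) (S : Finset F) :
    subAdj E V' S ⊆ V' := Finset.filter_subset _ _

lemma subAdj_empty' (E : Finset (F × V)) (V' : Finset V) :
    subAdj E V' (∅ : Finset F) = ∅ := by
  simp [subAdj]

lemma subAdj_union' (E : Finset (F × V)) (V' : Finset V) (S T : Finset F) :
    subAdj E V' (S ∪ T) = subAdj E V' S ∪ subAdj E V' T := by
  ext v
  simp only [mem_subAdj', Finset.mem_union]
  constructor
  · rintro ⟨hv, f, hf | hf, he⟩
    · exact Or.inl ⟨hv, f, hf, he⟩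
    · exact Or.inr ⟨hv, f, hf, he⟩
  · rintro (⟨hv, f, hf, he⟩ | ⟨hv, f, hf, he⟩)
    · exact ⟨hv, f, Or.inl hf, he⟩
    · exact ⟨hv, f, Or.inr hf, he⟩

lemma subAdj_sdiff_vert' (E : Finset (F × V)) (V' W : Finset V) (S : Finset F) :
    subAdj E (V' \ W) S = subAdj E V' S \ W := by
  ext v
  simp only [mem_subAdj', Finset.mem_sdiff]
  tauto

lemma sdiff_union_helper {α : Type*} [DecidableEq α] (a b c : Finset α) :
    a \ (b ∪ c) = (a \ b) \ c := by
  ext x; simp only [Finset.mem_sdiff, Finset.mem_union]; tauto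

lemma sdiff_sdiff_helper {α : Type*} [DecidableEq α] (a b c : Finset α) :
    (a \ b) \ (c \ b) = (a \ b) \ c := by
  ext x; simp only [Finset.mem_sdiff]; tauto

lemma exists_minSC (E : Finset (F × V)) (F' : Finset F) (V' : Finset V) :
    ∀ k (S : Finset F), S.card = k → S ⊆ F' → S.Nonempty → SCSet E V' S →
      ∃ T, T ⊆ S ∧ MinSCSet E F' V' T := by
  intro k
  induction k using Nat.strong_induction_on with
  | _ k ih =>
    intro S hcard hsub hne hsc
    by_cases h : ∃ S', S' ⊂ S ∧ S'.Nonempty ∧ SCSet E V' S'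
    · obtain ⟨S', hlt, hne', hsc'⟩ := h
      obtain ⟨T, hT, hmin⟩ := ih S'.card (hcard ▸ Finset.card_lt_card hlt) S' rfl
        ((subset_of_ssubset hlt).trans hsub) hne' hsc'
      exact ⟨T, hT.trans (subset_of_ssubset hlt), hmin⟩
    · push_neg at h
      exact ⟨S, subset_rfl, hsub, hne, hsc, fun S' hlt hne' => h S' hlt hne'⟩

lemma scGraph_sdiff (E : Finset (F × V)) {F' : Finset F} {V' : Finset V} {S : Finset F}
    (hG : SCGraph E F' V') (hS : S ⊆ F') (hsc : SCSet E V' S) :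
    SCGraph E (F' \ S) (V' \ subAdj E V' S) := by
  set N := subAdj E V' S with hN
  have hNcard : S.card = N.card := hsc.1
  have hNsub : N ⊆ V' := subAdj_subset' E V' S
  have key : ∀ S' ⊆ F' \ S, S'.card ≤ (subAdj E (V' \ N) S').card := by
    intro S' hS'
    have hdisj : Disjoint S S' := by
      refine Finset.disjoint_left.mpr fun x hx hx' => ?_
      exact (Finset.mem_sdiff.mp (hS' hx')).2 hx
    have h1 : (S ∪ S').card ≤ (subAdj E V' (S ∪ S')).card := by
      apply hG.2.2
      exact Finset.union_subset hS ((hS'.trans (Finset.sdiff_subset)))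
    rw [Finset.card_union_of_disjoint hdisj, subAdj_union'] at h1
    have h2 : (subAdj E V' S' \ N).card + N.card = (subAdj E V' S' ∪ N).card :=
      Finset.card_sdiff_add_card _ _
    rw [Finset.union_comm] at h2
    rw [← hN] at h1
    rw [subAdj_sdiff_vert']
    omega
  have hsdcard : (F' \ S).card = (V' \ N).card := by
    rw [Finset.card_sdiff_of_subset hS, Finset.card_sdiff_of_subset hNsub, hG.1, hNcard]
  refine ⟨hsdcard, ?_, key⟩
  have hle : (F' \ S).card ≤ (subAdj E (V' \ N) (F' \ S)).card := key _ subset_rfl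
  have hge : (subAdj E (V' \ N) (F' \ S)).card ≤ (V' \ N).card :=
    Finset.card_le_card (subAdj_subset' _ _ _)
  omega

lemma codPrev_zero {n : ℕ} (S : Fin (n + 1) → Finset F) :
    codPrev S 0 = ∅ := by
  simp [codPrev, Fin.not_lt_zero]

lemma codPrev_cons_succ {n : ℕ} (S₀ : Finset F) (T : Fin n → Finset F) (j : Fin n) :
    codPrev (Fin.cons S₀ T) j.succ = S₀ ∪ codPrev T j := by
  ext f
  simp only [codPrev, Finset.mem_biUnion, Finset.mem_filter, Finset.mem_univ, true_and,
    Finset.mem_union]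
  constructor
  · rintro ⟨k, hk, hf⟩
    induction k using Fin.cases with
    | zero => exact Or.inl (by simpa using hf)
    | succ l =>
      refine Or.inr ⟨l, ?_, by simpa using hf⟩
      exact (Fin.succ_lt_succ_iff).mp hk
  · rintro (hf | ⟨l, hl, hf⟩)
    · exact ⟨0, Fin.succ_pos j, by simpa using hf⟩
    · exact ⟨l.succ, Fin.succ_lt_succ_iff.mpr hl, by simpa using hf⟩

lemma exists_cod (E : Finset (F × V)) :
    ∀ k (F' : Finset F) (V' : Finset V), F'.card = k → SCGraph E F' V' →
      ∃ (n : ℕ) (S : Fin n → Finset F),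
        Finset.univ.biUnion S = F' ∧
        ∀ i, MinSCSet E (F' \ codPrev S i) (V' \ subAdj E V' (codPrev S i)) (S i) := by
  intro k
  induction k using Nat.strong_induction_on with
  | _ k ih =>
    intro F' V' hcard hG
    rcases F'.eq_empty_or_nonempty with h | h
    · exact ⟨0, Fin.elim0, by simp [h], fun i => i.elim0⟩
    · obtain ⟨S₀, hS0sub, hmin⟩ := exists_minSC E F' V' F'.card F' rfl subset_rfl h hG.2
      obtain ⟨hsub0, hS0ne, hS0sc, hS0min⟩ := hmin
      have hG' := scGraph_sdiff E hG hsub0 hS0sc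
      have hlt : (F' \ S₀).card < k := by
        have h1 : (F' \ S₀).card = F'.card - S₀.card := Finset.card_sdiff_of_subset hsub0
        have h2 : 0 < S₀.card := Finset.card_pos.mpr hS0ne
        have h3 : S₀.card ≤ F'.card := Finset.card_le_card hsub0
        omega
      obtain ⟨n, T, hTcov, hTmin⟩ := ih (F' \ S₀).card hlt (F' \ S₀) _ rfl hG'
      refine ⟨n + 1, Fin.cons S₀ T, ?_, ?_⟩
      · ext f
        simp only [Finset.mem_biUnion, Finset.mem_univ, true_and]
        have hT' : (∃ i : Fin n, f ∈ T i) ↔ f ∈ F' \ S₀ := by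
          rw [← hTcov]; simp
        constructor
        · rintro ⟨i, hi⟩
          induction i using Fin.cases with
          | zero => exact hsub0 (by simpa using hi)
          | succ l => exact (Finset.mem_sdiff.mp (hT'.mp ⟨l, by simpa using hi⟩)).1
        · intro hf
          by_cases hf0 : f ∈ S₀
          · exact ⟨0, by simpa using hf0⟩
          · obtain ⟨i, hi⟩ := hT'.mpr (Finset.mem_sdiff.mpr ⟨hf, hf0⟩)
            exact ⟨i.succ, by simpa using hi⟩
      · intro i
        induction i using Fin.cases with
        | zero =>
          rw [codPrev_zero, subAdj_empty', Finset.sdiff_empty, Finset.sdiff_empty,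
            Fin.cons_zero]
          exact ⟨hsub0, hS0ne, hS0sc, hS0min⟩
        | succ j =>
          have := hTmin j
          rw [subAdj_sdiff_vert', sdiff_sdiff_helper] at this
          rw [codPrev_cons_succ, Fin.cons_succ, subAdj_union', sdiff_union_helper,
            sdiff_union_helper]
          exact this


/-- `(S 0, …, S (n-1))` is a causal-ordering decomposition of the bipartite graph
with edges `E` on the full vertex sets: the sets cover `F` and each `S i` is a
minimal self-contained set in the subgraph induced by
`F \ (S^(1) ∪ ⋯ ∪ S^(i-1))` and `V \ N(S^(1) ∪ ⋯ ∪ S^(i-1))`. -/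
def IsCOD (E : Finset (F × V)) {n : ℕ} (S : Fin n → Finset F) : Prop :=
  Finset.univ.biUnion S = (Finset.univ : Finset F) ∧
  ∀ i : Fin n,
    MinSCSet E (Finset.univ \ codPrev S i)
      (Finset.univ \ subAdj E Finset.univ (codPrev S i)) (S i)

/-- every finite self-contained bipartite graph admits a causal-ordering
decomposition; in particular, if `F` is nonempty then it contains a minimal
self-contained subset. -/
theorem exists_causal_ordering_decomposition (E : Finset (F × V))
    (hG : SCGraph E Finset.univ Finset.univ) :
    (∃ (n : ℕ) (S : Fin n → Finset F), IsCOD E S) ∧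
    ((Finset.univ : Finset F).Nonempty →
      ∃ S : Finset F, MinSCSet E Finset.univ Finset.univ S) := by
  constructor
  · obtain ⟨n, S, hcov, hmin⟩ :=
      exists_cod E (Finset.univ : Finset F).card Finset.univ Finset.univ rfl hG
    exact ⟨n, S, hcov, hmin⟩
  · intro h
    obtain ⟨T, _, hT⟩ :=
      exists_minSC E Finset.univ Finset.univ (Finset.univ : Finset F).card
        Finset.univ rfl subset_rfl h hG.2
    exact ⟨T, hT⟩
end

section
/- Let M be a maximum matching of a finite bipartite graph G = (V, F, E) with coarse decomposition (T_I, T_C, T_O). Then no edge of E joins a vertex in T_I ∩ V with a vertex in (T_C ∪ T_O) ∩ F, and no edge of E joins a vertex in T_C ∩ V with a vertex in T_O ∩ F. -/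
variable {F V : Type*} [Fintype F] [Fintype V] [DecidableEq F] [DecidableEq V]

/-- `M` is a matching of the bipartite graph with edge set `E`:
`M ⊆ E` and no two edges of `M` share an endpoint. -/
def IsMatching (E M : Finset (F × V)) : Prop :=
  M ⊆ E ∧ (∀ e ∈ M, ∀ e' ∈ M, e.1 = e'.1 → e = e') ∧
    ∀ e ∈ M, ∀ e' ∈ M, e.2 = e'.2 → e = e'

/-- `M` is a maximum matching: a matching of greatest cardinality. -/
def IsMaxMatching (E M : Finset (F × V)) : Prop :=
  IsMatching E M ∧ ∀ M' : Finset (F × V), IsMatching E M' → M'.card ≤ M.card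

/-- The (symmetric) adjacency relation of the bipartite graph on `F ⊕ V`. -/
def sumAdj (E : Finset (F × V)) : (F ⊕ V) → (F ⊕ V) → Prop
  | Sum.inl f, Sum.inr v => (f, v) ∈ E
  | Sum.inr v, Sum.inl f => (f, v) ∈ E
  | _, _ => False

/-- The pair of consecutive path vertices forms an edge belonging to `M`. -/
def pairInM (M : Finset (F × V)) : (F ⊕ V) × (F ⊕ V) → Prop
  | (Sum.inl f, Sum.inr v) => (f, v) ∈ M
  | (Sum.inr v, Sum.inl f) => (f, v) ∈ M
  | _ => False

/-- `l` is an `M`-alternating path in the bipartite graph with edge set `E`: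
a nonempty sequence of distinct vertices in which consecutive vertices are joined
by edges of `E` lying alternately inside and outside `M`. -/
def IsAltPath (E M : Finset (F × V)) (l : List (F ⊕ V)) : Prop :=
  l ≠ [] ∧ l.Nodup ∧ l.Chain' (sumAdj E) ∧
    (l.zip l.tail).Chain' fun e e' => pairInM M e ↔ ¬ pairInM M e'

/-- `v ∈ V` is not an endpoint of any edge of `M`. -/
def VUnmatched (M : Finset (F × V)) (v : V) : Prop := ∀ f, (f, v) ∉ M

/-- `f ∈ F` is not an endpoint of any edge of `M`. -/
def FUnmatched (M : Finset (F × V)) (f : F) : Prop := ∀ v, (f, v) ∉ M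

/-- The incomplete set `T_I`: all vertices reachable from some `M`-unmatched
vertex of `V` by a (possibly trivial) `M`-alternating path. -/
def incompleteSet (E M : Finset (F × V)) : Set (F ⊕ V) :=
  {x | ∃ v : V, VUnmatched M v ∧ ∃ l : List (F ⊕ V),
    IsAltPath E M l ∧ l.head? = some (Sum.inr v) ∧ l.getLast? = some x}

/-- The overcomplete set `T_O`: all vertices reachable from some `M`-unmatched
vertex of `F` by a (possibly trivial) `M`-alternating path. -/
def overcompleteSet (E M : Finset (F × V)) : Set (F ⊕ V) :=
  {x | ∃ f : F, FUnmatched M f ∧ ∃ l : List (F ⊕ V),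
    IsAltPath E M l ∧ l.head? = some (Sum.inl f) ∧ l.getLast? = some x}

/-- The complete set `T_C = (V ∪ F) \ (T_I ∪ T_O)`. -/
def completeSet (E M : Finset (F × V)) : Set (F ⊕ V) :=
  Set.univ \ (incompleteSet E M ∪ overcompleteSet E M)

/-!
`T_I` is closed under passing from `V` to `F` along edges, and `T_O` from `F` to `V`: an
alternating path from an unmatched vertex that ends on its starting side is trivial or ends with a
matching edge, so for an edge `x y` at its end either `y` already lies on the path, or `x y ∉ M`
(the partner of `x` lies on the path) and the path extends to `y`. Moreover `T_I ∩ T_O = ∅` for a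
maximum matching: alternating paths from an unmatched `v ∈ V` and from an unmatched `f ∈ F` to a
common vertex, cut at the first vertex of the first path that lies on the second, join into an
augmenting path from `v` to `f`, and flipping the matching along it gives a larger matching. Both
parts of the theorem follow, since `T_C` is disjoint from `T_I ∪ T_O` by definition.
-/

section

variable {F V : Type*} {E M : Finset (F × V)}

theorem sumAdj_comm {x y : F ⊕ V} : sumAdj E x y ↔ sumAdj E y x := by
  cases x <;> cases y <;> simp [sumAdj]

theorem pairInM_comm {x y : F ⊕ V} : pairInM M (x, y) ↔ pairInM M (y, x) := by
  cases x <;> cases y <;> simp [pairInM]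

theorem isLeft_eq_not_of_sumAdj {x y : F ⊕ V} (h : sumAdj E x y) : y.isLeft = !x.isLeft := by
  cases x <;> cases y <;> simp_all [sumAdj]

theorem IsMatching.mono {N : Finset (F × V)} (hM : IsMatching E M) (hN : N ⊆ M) :
    IsMatching E N :=
  ⟨hN.trans hM.1, fun e he e' he' => hM.2.1 e (hN he) e' (hN he'),
    fun e he e' he' => hM.2.2 e (hN he) e' (hN he')⟩

theorem IsMatching.insert [DecidableEq F] [DecidableEq V] {e : F × V} (hM : IsMatching E M)
    (he : e ∈ E) (hfree : ∀ e' ∈ M, e'.1 ≠ e.1 ∧ e'.2 ≠ e.2) : IsMatching E (insert e M) := by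
  refine ⟨Finset.insert_subset he hM.1, ?_, ?_⟩
  · intro a ha b hb hab
    rw [Finset.mem_insert] at ha hb
    rcases ha with rfl | ha <;> rcases hb with rfl | hb
    · rfl
    · exact absurd hab.symm (hfree b hb).1
    · exact absurd hab (hfree a ha).1
    · exact hM.2.1 a ha b hb hab
  · intro a ha b hb hab
    rw [Finset.mem_insert] at ha hb
    rcases ha with rfl | ha <;> rcases hb with rfl | hb
    · rfl
    · exact absurd hab.symm (hfree b hb).2
    · exact absurd hab (hfree a ha).2
    · exact hM.2.2 a ha b hb hab

theorem IsMatching.eq_of_pairInM (hM : IsMatching E M) {x y z : F ⊕ V}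
    (hy : pairInM M (x, y)) (hz : pairInM M (x, z)) : y = z := by
  rcases x with f | v <;> rcases y with f' | v' <;> rcases z with f'' | v'' <;>
    simp only [pairInM] at hy hz ⊢
  · simpa using hM.2.1 _ hy _ hz rfl
  · simpa using hM.2.2 _ hy _ hz rfl

def Unmatched (M : Finset (F × V)) (x : F ⊕ V) : Prop := ∀ y, ¬ pairInM M (x, y)

theorem unmatched_inr_iff {v : V} : Unmatched M (Sum.inr v) ↔ VUnmatched M v :=
  ⟨fun h f => h (Sum.inl f), fun h y => by cases y <;> simp [pairInM, h _]⟩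

theorem unmatched_inl_iff {f : F} : Unmatched M (Sum.inl f) ↔ FUnmatched M f :=
  ⟨fun h v => h (Sum.inr v), fun h y => by cases y <;> simp [pairInM, h _]⟩

/-- `b` is the side (`true` for `F`) of the unmatched start of the path: along an alternating
path from an unmatched vertex, exactly the edges entering the start's side lie in `M`. -/
def AltStep (E M : Finset (F × V)) (b : Bool) (x y : F ⊕ V) : Prop :=
  sumAdj E x y ∧ (pairInM M (x, y) ↔ y.isLeft = b)

theorem altStep_comm {b : Bool} {x y : F ⊕ V} : AltStep E M (!b) y x ↔ AltStep E M b x y := by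
  unfold AltStep
  rw [sumAdj_comm, pairInM_comm]
  refine and_congr_right fun h => ?_
  rw [isLeft_eq_not_of_sumAdj h]
  cases x.isLeft <;> cases b <;> simp

def IsAltPathFrom (E M : Finset (F × V)) (s : F ⊕ V) (l : List (F ⊕ V)) : Prop :=
  l.head? = some s ∧ l.Nodup ∧ l.IsChain (AltStep E M s.isLeft)

def AltReachable (E M : Finset (F × V)) (s x : F ⊕ V) : Prop :=
  ∃ l, IsAltPathFrom E M s l ∧ l.getLast? = some x

theorem isChain_alternating_iff {b : Bool} : ∀ {x : F ⊕ V} {t : List (F ⊕ V)},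
    (∀ y ∈ t.head?, sumAdj E x y → (pairInM M (x, y) ↔ y.isLeft = b)) →
    ((x :: t).IsChain (sumAdj E) ∧
        ((x :: t).zip t).IsChain (fun e e' => pairInM M e ↔ ¬ pairInM M e') ↔
      (x :: t).IsChain (AltStep E M b))
  | _, [], _ => by simp
  | x, [y], hxy => by simpa [AltStep] using hxy
  | x, y :: z :: t, hxy => by
    have ih := isChain_alternating_iff (b := b) (x := y) (t := z :: t)
    simp only [List.zip_cons_cons, List.isChain_cons_cons, List.head?_cons, Option.mem_def,
      Option.some.injEq, forall_eq'] at ih hxy ⊢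
    constructor
    · rintro ⟨⟨hxy', hrest⟩, halt, hzip⟩
      have hyz : sumAdj E y z → (pairInM M (y, z) ↔ z.isLeft = b) := fun hs => by
        rw [isLeft_eq_not_of_sumAdj hs, ← not_iff_not, ← halt, hxy hxy']
        cases y.isLeft <;> cases b <;> simp
      exact ⟨⟨hxy', hxy hxy'⟩, (ih hyz).1 ⟨hrest, hzip⟩⟩
    · rintro ⟨⟨hxy', hxyb⟩, hrest⟩
      obtain ⟨hyz, hyzb⟩ := hrest.1
      obtain ⟨h1, h2⟩ := (ih fun _ => hyzb).2 hrest
      refine ⟨⟨hxy', h1⟩, ?_, h2⟩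
      rw [hxyb, hyzb, isLeft_eq_not_of_sumAdj hyz]
      cases y.isLeft <;> cases b <;> simp

theorem isAltPath_and_head?_iff {s : F ⊕ V} {l : List (F ⊕ V)} (hs : Unmatched M s) :
    IsAltPath E M l ∧ l.head? = some s ↔ IsAltPathFrom E M s l := by
  rcases l with _ | ⟨a, t⟩
  · simp [IsAltPathFrom]
  by_cases has : a = s
  · subst has
    have hfirst : ∀ y ∈ t.head?, sumAdj E a y → (pairInM M (a, y) ↔ y.isLeft = a.isLeft) :=
      fun y _ hy => by
        simp only [hs y, false_iff, isLeft_eq_not_of_sumAdj hy]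
        cases a.isLeft <;> simp
    simp only [IsAltPath, IsAltPathFrom, List.Chain', List.tail_cons, List.head?_cons, ne_eq,
      reduceCtorEq, not_false_eq_true, true_and, and_true, ← isChain_alternating_iff hfirst]
  · simp [IsAltPathFrom, has]

theorem mem_incompleteSet_iff {x : F ⊕ V} :
    x ∈ incompleteSet E M ↔ ∃ v, VUnmatched M v ∧ AltReachable E M (Sum.inr v) x := by
  simp only [incompleteSet, AltReachable, Set.mem_ofPred_eq]
  refine exists_congr fun v => and_congr_right fun hv => ?_
  simp only [← isAltPath_and_head?_iff (unmatched_inr_iff.2 hv), and_assoc]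

theorem mem_overcompleteSet_iff {x : F ⊕ V} :
    x ∈ overcompleteSet E M ↔ ∃ f, FUnmatched M f ∧ AltReachable E M (Sum.inl f) x := by
  simp only [overcompleteSet, AltReachable, Set.mem_ofPred_eq]
  refine exists_congr fun f => and_congr_right fun hf => ?_
  simp only [← isAltPath_and_head?_iff (unmatched_inl_iff.2 hf), and_assoc]

theorem IsAltPathFrom.mem_of_pairInM_getLast {s x y : F ⊕ V} {l : List (F ⊕ V)}
    (hM : IsMatching E M) (hs : Unmatched M s) (hl : IsAltPathFrom E M s l)
    (hx : l.getLast? = some x) (hxs : x.isLeft = s.isLeft) (hxy : pairInM M (x, y)) : y ∈ l := by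
  obtain ⟨l', rfl⟩ := List.getLast?_eq_some_iff.1 hx
  rcases l'.eq_nil_or_concat with rfl | ⟨l'', w, rfl⟩
  · obtain rfl : x = s := by simpa using hl.1
    exact absurd hxy (hs y)
  · have hwx : AltStep E M s.isLeft w x := (List.isChain_append.1 hl.2.2).2.2 w (by simp) x rfl
    have hxw : pairInM M (x, w) := pairInM_comm.1 (hwx.2.2 hxs)
    simp [hM.eq_of_pairInM hxy hxw]

theorem AltReachable.of_sumAdj {s x y : F ⊕ V} (hM : IsMatching E M) (hs : Unmatched M s)
    (hx : AltReachable E M s x) (hxs : x.isLeft = s.isLeft) (hxy : sumAdj E x y) :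
    AltReachable E M s y := by
  obtain ⟨l, hl, hlast⟩ := hx
  by_cases hy : y ∈ l
  · obtain ⟨l₁, l₂, rfl⟩ := List.append_of_mem hy
    refine ⟨l₁ ++ [y], ⟨?_, hl.2.1.sublist (by simp), (List.isChain_split.1 hl.2.2).1⟩, by simp⟩
    simpa [List.head?_append] using hl.1
  · refine ⟨l ++ [y], ⟨?_, ?_, List.isChain_append.2 ⟨hl.2.2, List.isChain_singleton y, ?_⟩⟩,
      by simp⟩
    · simp [List.head?_append, hl.1]
    · exact List.nodup_append.2 ⟨hl.2.1, List.nodup_singleton y, by grind⟩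
    · simp only [hlast, Option.mem_def, Option.some.injEq, List.head?_cons, forall_eq']
      refine ⟨hxy, iff_of_false (fun h => hy (hl.mem_of_pairInM_getLast hM hs hlast hxs h)) ?_⟩
      cases s <;> simp [isLeft_eq_not_of_sumAdj hxy, hxs]

theorem inl_mem_incompleteSet {f : F} {v : V} (hM : IsMatching E M) (hE : (f, v) ∈ E)
    (hv : Sum.inr v ∈ incompleteSet E M) : Sum.inl f ∈ incompleteSet E M := by
  obtain ⟨v₀, hv₀, hreach⟩ := mem_incompleteSet_iff.1 hv
  exact mem_incompleteSet_iff.2 ⟨v₀, hv₀, hreach.of_sumAdj hM (unmatched_inr_iff.2 hv₀) rfl hE⟩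

theorem inr_mem_overcompleteSet {f : F} {v : V} (hM : IsMatching E M) (hE : (f, v) ∈ E)
    (hf : Sum.inl f ∈ overcompleteSet E M) : Sum.inr v ∈ overcompleteSet E M := by
  obtain ⟨f₀, hf₀, hreach⟩ := mem_overcompleteSet_iff.1 hf
  exact mem_overcompleteSet_iff.2 ⟨f₀, hf₀, hreach.of_sumAdj hM (unmatched_inl_iff.2 hf₀) rfl hE⟩

theorem AltReachable.join {s s' x : F ⊕ V} (hs : AltReachable E M s x)
    (hs' : AltReachable E M s' x) (hside : s'.isLeft = !s.isLeft) : AltReachable E M s s' := by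
  classical
  obtain ⟨P, ⟨hPh, hPnd, hPc⟩, hPl⟩ := hs
  obtain ⟨Q, ⟨hQh, hQnd, hQc⟩, hQl⟩ := hs'
  obtain ⟨y, hy⟩ : ∃ y, P.find? (fun z => decide (z ∈ Q)) = some y :=
    Option.isSome_iff_exists.1 <| List.find?_isSome.2
      ⟨x, List.mem_of_getLast? hPl, by simpa using List.mem_of_getLast? hQl⟩
  obtain ⟨hyQ, P₁, P₂, rfl, hP₁⟩ := List.find?_eq_some_iff_append.1 hy
  obtain ⟨Q₁, Q₂, rfl⟩ := List.append_of_mem (by simpa using hyQ)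
  have hQ₁c : (Q₁ ++ [y]).reverse.IsChain (AltStep E M s.isLeft) := by
    rw [List.isChain_reverse]
    refine ((List.isChain_split.1 hQc).1).imp fun a b h => ?_
    rw [← altStep_comm, ← hside]
    exact h
  refine ⟨P₁ ++ (Q₁ ++ [y]).reverse, ⟨?_, ?_, ?_⟩, ?_⟩
  · simpa [List.head?_append] using hPh
  · refine List.nodup_append.2 ⟨(List.nodup_append.1 hPnd).1,
      List.nodup_reverse.2 (hQnd.sublist (by simp)), ?_⟩
    rintro a ha _ hb rfl
    have := hP₁ a ha
    simp_all
  · have := (List.isChain_split.1 hPc).1.append_overlap (l₃ := Q₁.reverse) (by simpa using hQ₁c)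
      (List.cons_ne_nil y [])
    simpa using this
  · have : (Q₁ ++ [y]).head? = some s' := by simpa [List.head?_append] using hQh
    rw [List.getLast?_append, List.getLast?_reverse, this, Option.some_or]

def reassign [DecidableEq F] [DecidableEq V] (M : Finset (F × V)) (g : F) (v w : V) :
    Finset (F × V) :=
  insert (g, v) (M.erase (g, w))

section reassign

variable [DecidableEq F] [DecidableEq V] {g : F} {v w : V}

theorem IsMatching.reassign (hM : IsMatching E M) (hgv : (g, v) ∈ E) (hgw : (g, w) ∈ M)
    (hv : VUnmatched M v) : IsMatching E (reassign M g v w) :=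
  (hM.mono (M.erase_subset _)).insert hgv fun ⟨a, b⟩ he =>
    ⟨fun h => (Finset.mem_erase.1 he).1 (hM.2.1 _ (Finset.mem_erase.1 he).2 _ hgw h),
      fun h : b = v => hv a (h ▸ (Finset.mem_erase.1 he).2)⟩

theorem card_reassign (hgw : (g, w) ∈ M) (hv : VUnmatched M v) :
    (reassign M g v w).card = M.card := by
  rw [reassign, Finset.card_insert_of_notMem fun h => hv g (Finset.mem_of_mem_erase h),
    Finset.card_erase_of_mem hgw]
  have := Finset.card_pos.2 ⟨_, hgw⟩
  omega

theorem vUnmatched_reassign (hM : IsMatching E M) (hgw : (g, w) ∈ M) (hvw : v ≠ w) :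
    VUnmatched (reassign M g v w) w := by
  intro g' hg'
  simp only [reassign, Finset.mem_insert, Finset.mem_erase, Prod.mk.injEq] at hg'
  rcases hg' with ⟨-, rfl⟩ | ⟨hne, hmem⟩
  · exact hvw rfl
  · exact hne (hM.2.2 _ hmem _ hgw rfl)

theorem fUnmatched_reassign {f : F} (hf : FUnmatched M f) (hfg : f ≠ g) :
    FUnmatched (reassign M g v w) f := by
  intro u hu
  simp only [reassign, Finset.mem_insert, Finset.mem_erase, Prod.mk.injEq] at hu
  rcases hu with ⟨rfl, -⟩ | ⟨-, hmem⟩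
  · exact hfg rfl
  · exact hf u hmem

theorem pairInM_reassign {x y : F ⊕ V} (hx : x ≠ Sum.inl g) (hy : y ≠ Sum.inl g) :
    pairInM (reassign M g v w) (x, y) ↔ pairInM M (x, y) := by
  rcases x with _ | _ <;> rcases y with _ | _ <;>
    simp_all [pairInM, reassign, Finset.mem_insert, Finset.mem_erase]

end reassign

theorem exists_card_eq_succ_of_augmenting {f : F} :
    ∀ (M : Finset (F × V)) (v : V) (t : List (F ⊕ V)), IsMatching E M → VUnmatched M v →
      FUnmatched M f → (Sum.inr v :: t).Nodup → (Sum.inr v :: t).IsChain (AltStep E M false) →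
      (Sum.inr v :: t).getLast? = some (Sum.inl f) →
      ∃ M' : Finset (F × V), IsMatching E M' ∧ M'.card = M.card + 1
  | _, _, [], _, _, _, _, _, hlast => by simp at hlast
  | _, _, [Sum.inr _], _, _, _, _, hc, _ => by simp [AltStep, sumAdj] at hc
  | _, _, Sum.inr _ :: _ :: _, _, _, _, _, hc, _ => by simp [AltStep, sumAdj] at hc
  | _, _, Sum.inl _ :: Sum.inl _ :: _, _, _, _, _, hc, _ => by simp [AltStep, sumAdj] at hc
  | M, v, [Sum.inl g], hM, hv, hf, _, hc, hlast => by
    classical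
    obtain rfl : g = f := by simpa using hlast
    refine ⟨insert (g, v) M, hM.insert ?_ fun ⟨a, b⟩ he => ⟨?_, ?_⟩,
      Finset.card_insert_of_notMem (hv g)⟩
    · exact (by simpa [AltStep, sumAdj] using hc : (g, v) ∈ E ∧ _).1
    · exact fun h : a = g => hf b (h ▸ he)
    · exact fun h : b = v => hv a (h ▸ he)
  | M, v, Sum.inl g :: Sum.inr w :: t, hM, hv, hf, hnd, hc, hlast => by
    -- Reassigning `g` from `w` to `v` keeps the size of the matching and leaves the augmenting
    -- path `w, …, f`.
    classical
    simp only [List.isChain_cons_cons, AltStep, sumAdj, pairInM, Sum.isLeft_inl,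
      Sum.isLeft_inr, Bool.true_eq_false, iff_false, iff_true] at hc
    obtain ⟨⟨hgv, -⟩, ⟨-, hgw⟩, hc⟩ := hc
    rw [List.nodup_cons, List.nodup_cons] at hnd
    obtain ⟨hv_notMem, hg_notMem, hnd⟩ := hnd
    rw [List.getLast?_cons_cons, List.getLast?_cons_cons] at hlast
    have hvw : v ≠ w := fun h => hv_notMem (by simp [h])
    have hfg : f ≠ g := by
      rintro rfl
      exact hg_notMem (List.mem_of_getLast? hlast)
    have hc' : (Sum.inr w :: t).IsChain (AltStep E (reassign M g v w) false) := by
      refine (List.IsChain.iff_of_mem_imp fun a b ha hb => ?_).1 hc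
      have hag : a ≠ Sum.inl g := by rintro rfl; exact hg_notMem ha
      have hbg : b ≠ Sum.inl g := by rintro rfl; exact hg_notMem hb
      rw [AltStep, AltStep, pairInM_reassign hag hbg]
    obtain ⟨M', hM', hcard⟩ := exists_card_eq_succ_of_augmenting _ w t (hM.reassign hgv hgw hv)
      (vUnmatched_reassign hM hgw hvw) (fUnmatched_reassign hf hfg) hnd hc' hlast
    exact ⟨M', hM', card_reassign hgw hv ▸ hcard⟩

theorem AltReachable.exists_card_eq_succ {v : V} {f : F}
    (hM : IsMatching E M) (hv : VUnmatched M v) (hf : FUnmatched M f)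
    (h : AltReachable E M (Sum.inr v) (Sum.inl f)) :
    ∃ M' : Finset (F × V), IsMatching E M' ∧ M'.card = M.card + 1 := by
  obtain ⟨l, ⟨hhead, hnd, hc⟩, hlast⟩ := h
  obtain ⟨t, rfl⟩ := List.head?_eq_some_iff.1 hhead
  exact exists_card_eq_succ_of_augmenting M v t hM hv hf hnd hc hlast

theorem disjoint_incompleteSet_overcompleteSet (hM : IsMaxMatching E M) :
    Disjoint (incompleteSet E M) (overcompleteSet E M) := by
  refine Set.disjoint_left.2 fun x hI hO => ?_
  obtain ⟨v, hv, hvx⟩ := mem_incompleteSet_iff.1 hI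
  obtain ⟨f, hf, hfx⟩ := mem_overcompleteSet_iff.1 hO
  obtain ⟨M', hM', hcard⟩ := (hvx.join hfx rfl).exists_card_eq_succ hM.1 hv hf
  have := hM.2 M' hM'
  omega

end

/-- no edge of `E` joins a vertex in `T_I ∩ V` with a vertex in
`(T_C ∪ T_O) ∩ F`, and no edge of `E` joins a vertex in `T_C ∩ V` with a vertex
in `T_O ∩ F`. -/
theorem no_edges_between_parts (E M : Finset (F × V))
    (hM : IsMaxMatching E M) :
    (¬ ∃ f v, (f, v) ∈ E ∧ Sum.inr v ∈ incompleteSet E M ∧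
        Sum.inl f ∈ completeSet E M ∪ overcompleteSet E M) ∧
    (¬ ∃ f v, (f, v) ∈ E ∧ Sum.inr v ∈ completeSet E M ∧
        Sum.inl f ∈ overcompleteSet E M) := by
  refine ⟨?_, ?_⟩
  · rintro ⟨f, v, hE, hv, hfC | hfO⟩
    · exact hfC.2 (Or.inl (inl_mem_incompleteSet hM.1 hE hv))
    · exact Set.disjoint_left.1 (disjoint_incompleteSet_overcompleteSet hM)
        (inl_mem_incompleteSet hM.1 hE hv) hfO
  · rintro ⟨f, v, hE, hvC, hf⟩
    exact hvC.2 (Or.inr (inr_mem_overcompleteSet hM.1 hE hf))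
end
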